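/- arXiv:1902.06698 — 2 statements merged into one kernel-verified Lean document; each statement's English description precedes it below -/
import Mathlib

section
/- Let I be an SMC instance with symmetric valuations (U = V) taking values in {0,1,α} for some α > 1, and let μ* be an optimal stable fractional matching for I. Then every integral matching appearing with positive weight in a Birkhoff–von Neumann support of μ* is itself a stable integral matching, and consequently there exists a stable integral matching μ with W(μ) = W(μ*). -/
/-!
Let `ν` be an integral matching with `c • ν ≤ μ*` for some `c > 0`, and suppose `(m, w)` blocks
`ν`, where `ν` matches `m` to `w'` and `w` to `m'`. If `(m, w)` has value `α`, then `m` and `w`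
each put mass `≥ c` on a partner of value `< α`, so `(m, w)` already blocks `μ*`. If it has
value `1`, the pairs `(m, w')` and `(m', w)` have value `0`, and shifting mass `c` from them to
`(m, w)` and `(m', w')` leaves nobody worse off (so stability survives) while raising the welfare,
contradicting optimality.

For the second claim take a Birkhoff–von Neumann decomposition of `μ*`: its welfare is the
weighted average of the welfares of the permutation matrices in it, which are stable and hence
each at most `W(μ*)`, so every one of positive weight attains `W(μ*)`.
-/

open Finset

/-- A fractional matching: nonnegative weights with row and column sums at most 1. -/
def IsFrac {n : ℕ} (μ : Fin n → Fin n → ℝ) : Prop :=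
  (∀ m w, 0 ≤ μ m w) ∧ (∀ m, ∑ w, μ m w ≤ 1) ∧ (∀ w, ∑ m, μ m w ≤ 1)

/-- An integral matching takes values in {0,1}. -/
def IsIntegralM {n : ℕ} (μ : Fin n → Fin n → ℝ) : Prop :=
  ∀ m w, μ m w = 0 ∨ μ m w = 1

/-- A complete (perfect) matching: all row and column sums equal 1. -/
def IsPerfect {n : ℕ} (μ : Fin n → Fin n → ℝ) : Prop :=
  (∀ m, ∑ w, μ m w = 1) ∧ (∀ w, ∑ m, μ m w = 1)

/-- Utility of man `m` under matching `μ`. -/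
def uM {n : ℕ} (U μ : Fin n → Fin n → ℝ) (m : Fin n) : ℝ := ∑ w, U m w * μ m w

/-- Utility of woman `w` under matching `μ`. -/
def vW {n : ℕ} (V μ : Fin n → Fin n → ℝ) (w : Fin n) : ℝ := ∑ m, V m w * μ m w

/-- Stability: no blocking pair. -/
def IsStable {n : ℕ} (U V μ : Fin n → Fin n → ℝ) : Prop :=
  ∀ m w, U m w ≤ uM U μ m ∨ V m w ≤ vW V μ w

/-- Social welfare. -/
def welfare {n : ℕ} (U V μ : Fin n → Fin n → ℝ) : ℝ :=
  (∑ m, uM U μ m) + (∑ w, vW V μ w)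

section Linearity

variable {n : ℕ} (U V : Fin n → Fin n → ℝ)

lemma uM_add (μ ν : Fin n → Fin n → ℝ) (m : Fin n) : uM U (μ + ν) m = uM U μ m + uM U ν m := by
  simp only [uM, Pi.add_apply, mul_add, sum_add_distrib]

lemma uM_smul (c : ℝ) (μ : Fin n → Fin n → ℝ) (m : Fin n) : uM U (c • μ) m = c * uM U μ m := by
  simp only [uM, Pi.smul_apply, smul_eq_mul, mul_sum, mul_left_comm]

lemma vW_add (μ ν : Fin n → Fin n → ℝ) (w : Fin n) : vW V (μ + ν) w = vW V μ w + vW V ν w :=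
  uM_add (Function.swap V) (Function.swap μ) (Function.swap ν) w

lemma vW_smul (c : ℝ) (μ : Fin n → Fin n → ℝ) (w : Fin n) : vW V (c • μ) w = c * vW V μ w :=
  uM_smul (Function.swap V) c (Function.swap μ) w

lemma welfare_add (μ ν : Fin n → Fin n → ℝ) :
    welfare U V (μ + ν) = welfare U V μ + welfare U V ν := by
  simp only [welfare, uM_add, vW_add, sum_add_distrib]
  ring

lemma welfare_smul (c : ℝ) (μ : Fin n → Fin n → ℝ) : welfare U V (c • μ) = c * welfare U V μ := by
  simp only [welfare, uM_smul, vW_smul, ← mul_sum, mul_add]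

def welfareLinearMap : (Fin n → Fin n → ℝ) →ₗ[ℝ] ℝ where
  toFun := welfare U V
  map_add' := welfare_add U V
  map_smul' := welfare_smul U V

lemma welfare_eq_sum_of_decomp {ι : Type*} [Fintype ι] (lam : ι → ℝ)
    (ν : ι → Fin n → Fin n → ℝ) (μ : Fin n → Fin n → ℝ)
    (hdec : ∀ m w, μ m w = ∑ j, lam j * ν j m w) :
    welfare U V μ = ∑ j, lam j * welfare U V (ν j) := by
  have hμ : μ = ∑ j, lam j • ν j := by
    ext m w
    simp [hdec, Finset.sum_apply]
  rw [hμ]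
  exact (map_sum (welfareLinearMap U V) _ univ).trans
    (sum_congr rfl fun j _ => map_smul (welfareLinearMap U V) (lam j) (ν j))

end Linearity

section Matchings

variable {n : ℕ}

lemma IsIntegralM.nonneg {ν : Fin n → Fin n → ℝ} (h : IsIntegralM ν) (m w : Fin n) : 0 ≤ ν m w := by
  rcases h m w with h | h <;> simp [h]

lemma IsPerfect.isFrac {ν : Fin n → Fin n → ℝ} (hnn : ∀ m w, 0 ≤ ν m w) (h : IsPerfect ν) :
    IsFrac ν :=
  ⟨hnn, fun m => (h.1 m).le, fun w => (h.2 w).le⟩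

lemma IsIntegralM.exists_eq_one {ν : Fin n → Fin n → ℝ} (hint : IsIntegralM ν) {m : Fin n}
    (hrow : ∑ w, ν m w = 1) : ∃ w, ν m w = 1 := by
  by_contra! h
  simp [fun w => (hint m w).resolve_right (h w)] at hrow

lemma uM_eq_of_eq_one (U : Fin n → Fin n → ℝ) {ν : Fin n → Fin n → ℝ} {m w : Fin n}
    (hnn : ∀ b, 0 ≤ ν m b) (hrow : ∑ b, ν m b = 1) (h : ν m w = 1) : uM U ν m = U m w := by
  have hrest : ∀ b ≠ w, ν m b = 0 := by
    have hsplit := add_sum_erase univ (ν m) (mem_univ w)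
    rw [h, hrow] at hsplit
    intro b hb
    exact (sum_eq_zero_iff_of_nonneg fun b _ => hnn b).1 (by linarith) b (by simp [hb])
  rw [uM, sum_eq_single w (fun b _ hb => by rw [hrest b hb, mul_zero]) (by simp), h, mul_one]

lemma vW_eq_of_eq_one (V : Fin n → Fin n → ℝ) {ν : Fin n → Fin n → ℝ} {m w : Fin n}
    (hnn : ∀ a, 0 ≤ ν a w) (hcol : ∑ a, ν a w = 1) (h : ν m w = 1) : vW V ν w = V m w :=
  uM_eq_of_eq_one (Function.swap V) (ν := Function.swap ν) hnn hcol h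

lemma uM_lt_of_pos_of_lt {U μ : Fin n → Fin n → ℝ} {α : ℝ} {m w : Fin n}
    (hU : ∀ b, U m b ≤ α) (hnn : ∀ b, 0 ≤ μ m b) (hrow : ∑ b, μ m b = 1)
    (hpos : 0 < μ m w) (hlt : U m w < α) : uM U μ m < α :=
  calc uM U μ m < ∑ b, α * μ m b :=
        sum_lt_sum (fun b _ => mul_le_mul_of_nonneg_right (hU b) (hnn b))
          ⟨w, mem_univ w, mul_lt_mul_of_pos_right hlt hpos⟩
    _ = α := by rw [← mul_sum, hrow, mul_one]

lemma vW_lt_of_pos_of_lt {V μ : Fin n → Fin n → ℝ} {α : ℝ} {m w : Fin n}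
    (hV : ∀ a, V a w ≤ α) (hnn : ∀ a, 0 ≤ μ a w) (hcol : ∑ a, μ a w = 1)
    (hpos : 0 < μ m w) (hlt : V m w < α) : vW V μ w < α :=
  uM_lt_of_pos_of_lt (U := Function.swap V) (μ := Function.swap μ) hV hnn hcol hpos hlt

lemma IsStable.mono {U V μ μ' : Fin n → Fin n → ℝ} (hstab : IsStable U V μ)
    (hu : ∀ m, uM U μ m ≤ uM U μ' m) (hv : ∀ w, vW V μ w ≤ vW V μ' w) : IsStable U V μ' :=
  fun m w => (hstab m w).imp (·.trans (hu m)) (·.trans (hv w))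

end Matchings

/-- The 2-cycle moving unit mass from the pairs `(m, w')`, `(m', w)` to `(m, w)`, `(m', w')`. -/
def exchange {n : ℕ} (m w m' w' : Fin n) : Fin n → Fin n → ℝ := fun a b =>
  (if a = m then (if b = w then 1 else 0) - (if b = w' then 1 else 0) else 0) +
    (if a = m' then (if b = w' then 1 else 0) - (if b = w then 1 else 0) else 0)

section Exchange

variable {n : ℕ} {m w m' w' : Fin n}

lemma sum_exchange_row (a : Fin n) : ∑ b, exchange m w m' w' a b = 0 := by
  simp [exchange, sum_add_distrib]

lemma sum_exchange_col (b : Fin n) : ∑ a, exchange m w m' w' a b = 0 := by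
  simp [exchange, sum_add_distrib]

lemma uM_exchange (U : Fin n → Fin n → ℝ) (a : Fin n) :
    uM U (exchange m w m' w') a =
      (if a = m then U m w - U m w' else 0) + (if a = m' then U m' w' - U m' w else 0) := by
  by_cases ha : a = m <;> by_cases ha' : a = m' <;> subst_vars <;>
    simp [uM, exchange, mul_sub, *]

lemma vW_exchange (V : Fin n → Fin n → ℝ) (b : Fin n) :
    vW V (exchange m w m' w') b =
      (if b = w then V m w - V m' w else 0) + (if b = w' then V m' w' - V m w' else 0) := by
  by_cases hb : b = w <;> by_cases hb' : b = w' <;> subst_vars <;>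
    simp [vW, exchange, mul_add, sum_add_distrib, *] <;> ring

lemma welfare_exchange (U V : Fin n → Fin n → ℝ) :
    welfare U V (exchange m w m' w') =
      (U m w - U m w') + (U m' w' - U m' w) + ((V m w - V m' w) + (V m' w' - V m w')) := by
  simp [welfare, uM_exchange, vW_exchange, sum_add_distrib]

lemma add_smul_exchange_nonneg {μ : Fin n → Fin n → ℝ} (hnn : ∀ a b, 0 ≤ μ a b) (hmm' : m ≠ m')
    {c : ℝ} (hc : 0 ≤ c) (h1 : c ≤ μ m w') (h2 : c ≤ μ m' w) (a b : Fin n) :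
    0 ≤ (μ + c • exchange m w m' w') a b := by
  simp only [Pi.add_apply, Pi.smul_apply, smul_eq_mul, exchange]
  split_ifs <;> subst_vars <;> first | exact absurd rfl hmm' | nlinarith [hnn a b]

lemma sum_add_smul_exchange_row {μ : Fin n → Fin n → ℝ} (c : ℝ) (a : Fin n) :
    ∑ b, (μ + c • exchange m w m' w') a b = ∑ b, μ a b := by
  simp [sum_add_distrib, ← mul_sum, sum_exchange_row]

lemma sum_add_smul_exchange_col {μ : Fin n → Fin n → ℝ} (c : ℝ) (b : Fin n) :
    ∑ a, (μ + c • exchange m w m' w') a b = ∑ a, μ a b := by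
  simp [sum_add_distrib, ← mul_sum, sum_exchange_col]

lemma exists_isStable_welfare_lt_of_exchange {U V μ : Fin n → Fin n → ℝ}
    (hnn : ∀ a b, 0 ≤ μ a b) (hperf : IsPerfect μ) (hstab : IsStable U V μ)
    (hmm' : m ≠ m') {c : ℝ} (hc : 0 < c) (h1 : c ≤ μ m w') (h2 : c ≤ μ m' w)
    (hm : U m w' < U m w) (hm' : U m' w ≤ U m' w') (hw : V m' w ≤ V m w)
    (hw' : V m w' ≤ V m' w') :
    ∃ μ', IsFrac μ' ∧ IsStable U V μ' ∧ welfare U V μ < welfare U V μ' := by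
  refine ⟨μ + c • exchange m w m' w',
    ⟨add_smul_exchange_nonneg hnn hmm' hc.le h1 h2, fun a => ?_, fun b => ?_⟩,
    hstab.mono (fun a => ?_) (fun b => ?_), ?_⟩
  · rw [sum_add_smul_exchange_row, hperf.1 a]
  · rw [sum_add_smul_exchange_col, hperf.2 b]
  · rw [uM_add, uM_smul, uM_exchange, le_add_iff_nonneg_right]
    exact mul_nonneg hc.le (by split_ifs <;> linarith)
  · rw [vW_add, vW_smul, vW_exchange, le_add_iff_nonneg_right]
    exact mul_nonneg hc.le (by split_ifs <;> linarith)
  · rw [welfare_add, welfare_smul, welfare_exchange, lt_add_iff_pos_right]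
    exact mul_pos hc (by linarith)

end Exchange

lemma isStable_of_smul_le_of_optimal {n : ℕ} {U μ ν : Fin n → Fin n → ℝ} {α c : ℝ} (hα : 1 < α)
    (hter : ∀ m w, U m w = 0 ∨ U m w = 1 ∨ U m w = α)
    (hnn : ∀ m w, 0 ≤ μ m w) (hperf : IsPerfect μ) (hstab : IsStable U U μ)
    (hopt : ∀ μ', IsFrac μ' → IsStable U U μ' → welfare U U μ' ≤ welfare U U μ)
    (hint : IsIntegralM ν) (hνperf : IsPerfect ν) (hc : 0 < c) (hle : ∀ a b, c * ν a b ≤ μ a b) :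
    IsStable U U ν := by
  have hU0 : ∀ a b, 0 ≤ U a b := fun a b => by rcases hter a b with h | h | h <;> linarith
  have hUα : ∀ a b, U a b ≤ α := fun a b => by rcases hter a b with h | h | h <;> linarith
  have hU1 : ∀ a b, U a b < 1 → U a b = 0 := fun a b h => by
    rcases hter a b with h' | h' | h' <;> linarith
  intro m w
  by_contra! hblock
  obtain ⟨w', hw'⟩ := hint.exists_eq_one (hνperf.1 m)
  obtain ⟨m', hm'⟩ := IsIntegralM.exists_eq_one (ν := Function.swap ν) (fun a b => hint b a)
    (hνperf.2 w)
  have huM : ∀ {x}, ν m x = 1 → uM U ν m = U m x :=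
    uM_eq_of_eq_one U (fun b => hint.nonneg m b) (hνperf.1 m)
  rw [huM hw', vW_eq_of_eq_one U (fun a => hint.nonneg a w) (hνperf.2 w) hm'] at hblock
  obtain ⟨hm, hw⟩ := hblock
  have hc1 : c ≤ μ m w' := by simpa [hw'] using hle m w'
  have hc2 : c ≤ μ m' w := by simpa [hm'] using hle m' w
  rcases hter m w with hmw | hmw | hmw
  · linarith [hU0 m w']
  · have hmm' : m ≠ m' := by
      rintro rfl
      exact hm.ne ((huM hw').symm.trans (huM hm'))
    obtain ⟨μ', hfrac, hstab', hlt⟩ := exists_isStable_welfare_lt_of_exchange hnn hperf hstab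
      hmm' hc hc1 hc2 hm (by rw [hU1 m' w (hmw ▸ hw)]; exact hU0 m' w') hw.le
      (by rw [hU1 m w' (hmw ▸ hm)]; exact hU0 m' w')
    exact (hopt μ' hfrac hstab').not_gt hlt
  · rcases hstab m w with h | h
    · exact h.not_gt (hmw ▸ uM_lt_of_pos_of_lt (hUα m) (hnn m) (hperf.1 m)
        (hc.trans_le hc1) (hmw ▸ hm))
    · exact h.not_gt (hmw ▸ vW_lt_of_pos_of_lt (fun a => hUα a w) (fun a => hnn a w) (hperf.2 w)
        (hc.trans_le hc2) (hmw ▸ hw))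

section Decomposition

variable {n : ℕ}

lemma smul_le_of_eq_sum {ι : Type*} [Fintype ι] {lam : ι → ℝ} {ν : ι → Fin n → Fin n → ℝ}
    {μ : Fin n → Fin n → ℝ} (hlam : ∀ j, 0 ≤ lam j) (hν : ∀ j a b, 0 ≤ ν j a b)
    (hdec : ∀ a b, μ a b = ∑ j, lam j * ν j a b) (j : ι) (a b : Fin n) :
    lam j * ν j a b ≤ μ a b := by
  rw [hdec]
  exact single_le_sum (f := fun i => lam i * ν i a b) (fun i _ => mul_nonneg (hlam i) (hν i a b))
    (mem_univ j)

lemma eq_of_forall_le_of_eq_sum_mul {ι : Type*} [Fintype ι] {lam y : ι → ℝ} {x : ℝ}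
    (hlam : ∀ j, 0 ≤ lam j) (hsum : ∑ j, lam j = 1) (hx : x = ∑ j, lam j * y j)
    (hle : ∀ j, 0 < lam j → y j ≤ x) {j : ι} (hj : 0 < lam j) : y j = x := by
  have hgap : ∑ i, lam i * (x - y i) = 0 := by
    simp only [mul_sub, sum_sub_distrib, ← sum_mul, hsum, one_mul, ← hx, sub_self]
  have hnonneg : ∀ i ∈ univ, 0 ≤ lam i * (x - y i) := fun i _ => by
    rcases (hlam i).eq_or_lt with h | h
    · simp [← h]
    · exact mul_nonneg h.le (sub_nonneg.2 (hle i h))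
  have hj0 := (sum_eq_zero_iff_of_nonneg hnonneg).1 hgap j (mem_univ j)
  linarith [(mul_eq_zero.1 hj0).resolve_left hj.ne']

lemma isIntegralM_permMatrix (σ : Equiv.Perm (Fin n)) : IsIntegralM (σ.permMatrix ℝ) :=
  fun a b => by
    rw [Equiv.Perm.permMatrix, PEquiv.toMatrix_apply]
    split_ifs <;> simp

lemma isPerfect_permMatrix (σ : Equiv.Perm (Fin n)) : IsPerfect (σ.permMatrix ℝ) :=
  ⟨sum_row_of_mem_doublyStochastic permMatrix_mem_doublyStochastic,
    sum_col_of_mem_doublyStochastic permMatrix_mem_doublyStochastic⟩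

lemma exists_eq_sum_permMatrix {μ : Fin n → Fin n → ℝ} (hnn : ∀ a b, 0 ≤ μ a b)
    (hperf : IsPerfect μ) :
    ∃ wt : Equiv.Perm (Fin n) → ℝ, (∀ σ, 0 ≤ wt σ) ∧ ∑ σ, wt σ = 1 ∧
      ∀ a b, μ a b = ∑ σ, wt σ * σ.permMatrix ℝ a b := by
  have hμ : Matrix.of μ ∈ doublyStochastic ℝ (Fin n) :=
    (mem_doublyStochastic_iff_sum).2 ⟨hnn, hperf.1, hperf.2⟩
  obtain ⟨wt, hwt0, hwt1, hdec⟩ := exists_eq_sum_perm_of_mem_doublyStochastic hμ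
  refine ⟨wt, hwt0, hwt1, fun a b => ?_⟩
  simpa [Matrix.sum_apply] using (congrFun₂ hdec a b).symm

end Decomposition

theorem stmt2 {n : ℕ} (U V : Fin n → Fin n → ℝ) (α : ℝ) (hα : 1 < α)
    (hsym : ∀ m w, U m w = V m w)
    (hter : ∀ m w, U m w = 0 ∨ U m w = 1 ∨ U m w = α)
    (μs : Fin n → Fin n → ℝ) (hnn : ∀ m w, 0 ≤ μs m w) (hperf : IsPerfect μs)
    (hstab : IsStable U V μs)
    (hopt : ∀ μ', IsFrac μ' → IsStable U V μ' → welfare U V μ' ≤ welfare U V μs) :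
    (∀ (k : ℕ) (lam : Fin k → ℝ) (ν : Fin k → Fin n → Fin n → ℝ),
        (∀ j, 0 < lam j) → (∑ j, lam j = 1) →
        (∀ j, IsIntegralM (ν j) ∧ IsPerfect (ν j)) →
        (∀ m w, μs m w = ∑ j, lam j * ν j m w) →
        ∀ j, IsStable U V (ν j)) ∧
    ∃ μ : Fin n → Fin n → ℝ, IsIntegralM μ ∧ IsPerfect μ ∧ IsStable U V μ ∧
      welfare U V μ = welfare U V μs := by
  obtain rfl : U = V := funext₂ hsym
  have hsupp {ν : Fin n → Fin n → ℝ} {c : ℝ} : IsIntegralM ν → IsPerfect ν → 0 < c →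
      (∀ a b, c * ν a b ≤ μs a b) → IsStable U U ν :=
    isStable_of_smul_le_of_optimal hα hter hnn hperf hstab hopt
  refine ⟨fun k lam ν hpos _ hν hdec j => hsupp (hν j).1 (hν j).2 (hpos j)
    (smul_le_of_eq_sum (fun i => (hpos i).le) (fun i => (hν i).1.nonneg) hdec j), ?_⟩
  obtain ⟨wt, hwt0, hwt1, hdec⟩ := exists_eq_sum_permMatrix hnn hperf
  have hstabσ (σ : Equiv.Perm (Fin n)) (hσ : 0 < wt σ) : IsStable U U (σ.permMatrix ℝ) :=
    hsupp (isIntegralM_permMatrix σ) (isPerfect_permMatrix σ) hσ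
      (smul_le_of_eq_sum hwt0 (fun τ => (isIntegralM_permMatrix τ).nonneg) hdec σ)
  obtain ⟨σ, -, hσ⟩ := exists_lt_of_sum_lt (s := univ) (f := 0) (g := wt) (by simp [hwt1])
  refine ⟨σ.permMatrix ℝ, isIntegralM_permMatrix σ, isPerfect_permMatrix σ, hstabσ σ hσ,
    eq_of_forall_le_of_eq_sum_mul hwt0 hwt1 (welfare_eq_sum_of_decomp U U wt _ _ hdec)
      (fun τ hτ => hopt _ ((isPerfect_permMatrix τ).isFrac (isIntegralM_permMatrix τ).nonneg)
        (hstabσ τ hτ)) hσ⟩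
end

section
/- Existence of a 1/2-stable fractional matching with welfare at least the optimal stable welfare: for any SMC instance I, there exists a fractional matching μ such that for every pair (m,w), u_m(μ) ≥ (1/2)U(m,w) or v_w(μ) ≥ (1/2)V(m,w), and W(μ) ≥ W(μ*) for every stable fractional matching μ*. (This follows by relaxing the integrality of the stability-indicator variables y(m,w) ∈ {0,1} to y(m,w) ∈ [0,1] in the MILP formulation and using max{y, 1−y} ≥ 1/2.) -/
open Finset

/-!
Stable matchings exist (deferred acceptance, after breaking ties by index), and a stable matching
is `1/2`-stable because valuations are nonnegative. The `1/2`-stable fractional matchings form a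
nonempty compact set on which the continuous welfare attains a maximum; that maximiser dominates
every stable matching.
-/

namespace DeferredAcceptance

variable {n : ℕ} (U V : Fin n → Fin n → ℝ)

/-- Ties in the valuations are broken by index, so that both sides have strict preferences. -/
def manKey (m w : Fin n) : ℝ ×ₗ Fin n := toLex (U m w, w)

def womanKey (w m : Fin n) : ℝ ×ₗ Fin n := toLex (V m w, m)

variable {U V}

lemma manKey_injective (m : Fin n) : Function.Injective (manKey U m) :=
  fun _ _ h => congrArg Prod.snd (toLex_inj.mp h)

lemma womanKey_injective (w : Fin n) : Function.Injective (womanKey V w) :=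
  fun _ _ h => congrArg Prod.snd (toLex_inj.mp h)

lemma le_of_manKey_le {m w w' : Fin n} (h : manKey U m w' ≤ manKey U m w) : U m w' ≤ U m w :=
  Prod.Lex.monotone_fst _ _ h

lemma le_of_womanKey_le {w m m' : Fin n} (h : womanKey V w m ≤ womanKey V w m') :
    V m w ≤ V m' w :=
  Prod.Lex.monotone_fst _ _ h

variable (U V)

/-- `R` is the set of pairs `(m, w)` in which `w` has already rejected `m`; each man proposes to his
favourite woman who has not rejected him. -/
def Proposes (R : Finset (Fin n × Fin n)) (m w : Fin n) : Prop :=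
  (m, w) ∉ R ∧ ∀ w', (m, w') ∉ R → manKey U m w' ≤ manKey U m w

def HasBetterProposer (R : Finset (Fin n × Fin n)) (m w : Fin n) : Prop :=
  ∃ m', Proposes U R m' w ∧ womanKey V w m < womanKey V w m'

/-- The invariant of deferred acceptance. -/
def IsJustified (R : Finset (Fin n × Fin n)) : Prop :=
  ∀ p ∈ R, HasBetterProposer U V R p.1 p.2

variable {U V}

lemma Proposes.unique {R : Finset (Fin n × Fin n)} {m w w' : Fin n}
    (h : Proposes U R m w) (h' : Proposes U R m w') : w = w' :=
  manKey_injective m (le_antisymm (h'.2 w h.1) (h.2 w' h'.1))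

lemma exists_proposes_of_notMem {R : Finset (Fin n × Fin n)} {m w : Fin n} (h : (m, w) ∉ R) :
    ∃ w', Proposes U R m w' ∧ manKey U m w ≤ manKey U m w' := by
  classical
  obtain ⟨w', hmem, hmax⟩ :=
    exists_max_image (univ.filter fun w => (m, w) ∉ R) (manKey U m) ⟨w, by simpa using h⟩
  have hw' : (m, w') ∉ R := (mem_filter.mp hmem).2
  exact ⟨w', ⟨hw', fun v hv => hmax v (by simpa using hv)⟩, hmax w (by simpa using h)⟩

lemma HasBetterProposer.exists_best {R : Finset (Fin n × Fin n)} {m w : Fin n}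
    (h : HasBetterProposer U V R m w) :
    ∃ b, Proposes U R b w ∧ womanKey V w m < womanKey V w b ∧
      ∀ m', Proposes U R m' w → womanKey V w m' ≤ womanKey V w b := by
  classical
  obtain ⟨m', hm', hlt⟩ := h
  obtain ⟨b, hmem, hmax⟩ := exists_max_image (univ.filter fun m' => Proposes U R m' w)
    (womanKey V w) ⟨m', by simpa using hm'⟩
  have hb : Proposes U R b w := (mem_filter.mp hmem).2
  exact ⟨b, hb, hlt.trans_le (hmax m' (by simpa using hm')), fun k hk => hmax k (by simpa using hk)⟩

lemma Proposes.insert {R : Finset (Fin n × Fin n)} {m w m' w' : Fin n}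
    (h : Proposes U R m' w') (hne : (m', w') ≠ (m, w)) : Proposes U (insert (m, w) R) m' w' :=
  ⟨by simpa [hne] using h.1, fun v hv => h.2 v fun hvR => hv (mem_insert_of_mem hvR)⟩

/-- Rejecting a man who is outbid keeps the invariant: the best proposer of each woman stays. -/
lemma IsJustified.insert {R : Finset (Fin n × Fin n)} (hR : IsJustified U V R) {m w : Fin n}
    (hprop : Proposes U R m w) (hbetter : HasBetterProposer U V R m w) :
    IsJustified U V (insert (m, w) R) := by
  intro p hp
  have hpR : HasBetterProposer U V R p.1 p.2 := by
    rcases mem_insert.mp hp with rfl | hp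
    · exact hbetter
    · exact hR p hp
  obtain ⟨b, hb, hlt, hbest⟩ := hpR.exists_best
  refine ⟨b, hb.insert ?_, hlt⟩
  intro heq
  obtain ⟨rfl, hw⟩ := Prod.mk.inj heq
  obtain ⟨m', hm', hm'lt⟩ := hbetter
  rw [← hw] at hm' hm'lt
  exact (hm'lt.trans_le (hbest m' hm')).false

/-- A justified rejection set of maximal size is a fixed point of deferred acceptance. -/
lemma exists_isJustified_forall_not_hasBetterProposer :
    ∃ R, IsJustified U V R ∧ ∀ m w, Proposes U R m w → ¬ HasBetterProposer U V R m w := by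
  classical
  obtain ⟨R, hR, hmax⟩ := exists_max_image (univ.filter (IsJustified U V)) card
    ⟨∅, by simp [IsJustified]⟩
  have hR : IsJustified U V R := (mem_filter.mp hR).2
  refine ⟨R, hR, fun m w hprop hbetter => ?_⟩
  have := hmax _ (mem_filter.mpr ⟨mem_univ _, hR.insert hprop hbetter⟩)
  rw [card_insert_of_notMem hprop.1] at this
  omega

variable (U) in
open scoped Classical in
noncomputable def proposalMatching (R : Finset (Fin n × Fin n)) : Fin n → Fin n → ℝ :=
  fun m w => if Proposes U R m w then 1 else 0

lemma uM_proposalMatching {m w : Fin n} {R : Finset (Fin n × Fin n)} (h : Proposes U R m w) :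
    uM U (proposalMatching U R) m = U m w := by
  have hother (w') (hw' : w' ≠ w) : ¬ Proposes U R m w' := fun h' => hw' (h'.unique h)
  rw [uM, sum_eq_single w (fun w' _ hw' => by simp [proposalMatching, hother w' hw']) (by simp)]
  simp [proposalMatching, h]

section Stable

variable {R : Finset (Fin n × Fin n)}
  (hR : ∀ m w, Proposes U R m w → ¬ HasBetterProposer U V R m w)
include hR

lemma Proposes.unique_left {m m' w : Fin n} (h : Proposes U R m w) (h' : Proposes U R m' w) :
    m = m' := by
  rcases lt_trichotomy (womanKey V w m) (womanKey V w m') with hlt | heq | hlt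
  · exact absurd ⟨m', h', hlt⟩ (hR m w h)
  · exact womanKey_injective w heq
  · exact absurd ⟨m, h, hlt⟩ (hR m' w h')

lemma isFrac_proposalMatching : IsFrac (proposalMatching U R) := by
  classical
  refine ⟨fun m w => by unfold proposalMatching; split_ifs <;> norm_num, fun m => ?_, fun w => ?_⟩
  · simp only [proposalMatching, sum_boole, Nat.cast_le_one]
    exact card_le_one.mpr fun w hw w' hw' => (mem_filter.mp hw).2.unique (mem_filter.mp hw').2
  · simp only [proposalMatching, sum_boole, Nat.cast_le_one]
    exact card_le_one.mpr fun m hm m' hm' =>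
      (mem_filter.mp hm).2.unique_left hR (mem_filter.mp hm').2

lemma vW_proposalMatching {m w : Fin n} (h : Proposes U R m w) :
    vW V (proposalMatching U R) w = V m w := by
  have hother (m') (hm' : m' ≠ m) : ¬ Proposes U R m' w := fun h' => hm' (h'.unique_left hR h)
  rw [vW, sum_eq_single m (fun m' _ hm' => by simp [proposalMatching, hother m' hm']) (by simp)]
  simp [proposalMatching, h]

lemma isStable_proposalMatching (hJ : IsJustified U V R) :
    IsStable U V (proposalMatching U R) := by
  intro m w
  by_cases hmw : (m, w) ∈ R
  · obtain ⟨m', hm', hlt⟩ := hJ _ hmw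
    exact .inr ((vW_proposalMatching hR hm').symm ▸ le_of_womanKey_le hlt.le)
  · obtain ⟨w', hw', hle⟩ := exists_proposes_of_notMem hmw
    exact .inl ((uM_proposalMatching hw').symm ▸ le_of_manKey_le hle)

end Stable

end DeferredAcceptance

open DeferredAcceptance in
theorem exists_isFrac_isStable {n : ℕ} (U V : Fin n → Fin n → ℝ) :
    ∃ μ, IsFrac μ ∧ IsStable U V μ := by
  obtain ⟨R, hJ, hR⟩ := exists_isJustified_forall_not_hasBetterProposer (U := U) (V := V)
  exact ⟨_, isFrac_proposalMatching hR, isStable_proposalMatching hR hJ⟩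

def IsHalfStable {n : ℕ} (U V μ : Fin n → Fin n → ℝ) : Prop :=
  ∀ m w, U m w / 2 ≤ uM U μ m ∨ V m w / 2 ≤ vW V μ w

section HalfStable

variable {n : ℕ} {U V : Fin n → Fin n → ℝ}

lemma IsStable.isHalfStable (hU : ∀ m w, 0 ≤ U m w) (hV : ∀ m w, 0 ≤ V m w)
    {μ : Fin n → Fin n → ℝ} (h : IsStable U V μ) : IsHalfStable U V μ := fun m w =>
  (h m w).imp (fun h => by linarith [hU m w]) (fun h => by linarith [hV m w])

lemma IsFrac.le_one {μ : Fin n → Fin n → ℝ} (h : IsFrac μ) (m w : Fin n) : μ m w ≤ 1 :=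
  (single_le_sum (fun w _ => h.1 m w) (mem_univ w)).trans (h.2.1 m)

lemma isClosed_setOf_isFrac : IsClosed {μ : Fin n → Fin n → ℝ | IsFrac μ} := by
  simp only [IsFrac, Set.setOf_and, Set.setOf_forall]
  refine .inter ?_ (.inter ?_ ?_)
  · exact isClosed_iInter fun _ => isClosed_iInter fun _ =>
      isClosed_le continuous_const (by fun_prop)
  all_goals exact isClosed_iInter fun _ => isClosed_le (by fun_prop) continuous_const

lemma isCompact_setOf_isFrac : IsCompact {μ : Fin n → Fin n → ℝ | IsFrac μ} :=
  (isCompact_univ_pi fun _ => isCompact_univ_pi fun _ => isCompact_Icc).of_isClosed_subset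
    isClosed_setOf_isFrac fun _ hμ m _ w _ => ⟨hμ.1 m w, hμ.le_one m w⟩

variable (U V)

@[fun_prop]
lemma continuous_uM (m : Fin n) : Continuous fun μ : Fin n → Fin n → ℝ => uM U μ m := by
  unfold uM; fun_prop

@[fun_prop]
lemma continuous_vW (w : Fin n) : Continuous fun μ : Fin n → Fin n → ℝ => vW V μ w := by
  unfold vW; fun_prop

lemma continuous_welfare : Continuous fun μ : Fin n → Fin n → ℝ => welfare U V μ := by
  unfold welfare; fun_prop

lemma isClosed_setOf_isHalfStable : IsClosed {μ : Fin n → Fin n → ℝ | IsHalfStable U V μ} := by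
  simp only [IsHalfStable, Set.setOf_forall, Set.setOf_or]
  exact isClosed_iInter fun m => isClosed_iInter fun w =>
    (isClosed_le (by fun_prop) (by fun_prop)).union (isClosed_le (by fun_prop) (by fun_prop))

end HalfStable

theorem stmt13 {n : ℕ} (U V : Fin n → Fin n → ℝ)
    (hU : ∀ m w, 0 ≤ U m w) (hV : ∀ m w, 0 ≤ V m w) :
    ∃ μ : Fin n → Fin n → ℝ, IsFrac μ ∧
      (∀ m w, U m w / 2 ≤ uM U μ m ∨ V m w / 2 ≤ vW V μ w) ∧
      ∀ μ', IsFrac μ' → IsStable U V μ' → welfare U V μ' ≤ welfare U V μ := by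
  have hcompact : IsCompact {μ | IsFrac μ ∧ IsHalfStable U V μ} :=
    isCompact_setOf_isFrac.inter_right (isClosed_setOf_isHalfStable U V)
  obtain ⟨μ₀, hfrac₀, hstable₀⟩ := exists_isFrac_isStable U V
  obtain ⟨μ, ⟨hfrac, hhalf⟩, hmax⟩ := hcompact.exists_isMaxOn
    ⟨μ₀, hfrac₀, hstable₀.isHalfStable hU hV⟩ (continuous_welfare U V).continuousOn
  exact ⟨μ, hfrac, hhalf, fun μ' hfrac' hstable' => hmax ⟨hfrac', hstable'.isHalfStable hU hV⟩⟩
end
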